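/- For every positive integer a, the lattice graph Lip(a), generated by the 4×4 matrix with rows (a,−a,−a,−a),(a,a,−a,a),(a,a,a,−a),(a,−a,a,a), is linearly symmetric, and its projection over e₄ is isomorphic to the face-centered cubic lattice graph FCC(2a); that is, Lip(a) is a symmetric lift of FCC(2a). -/

import Mathlib

/-!
Swapping coordinates 1 and i permutes the columns of Lip(a) up to sign, so these permutation
matrices give the linear symmetry. For the projection, the inclusion ℤ³ → ℤ⁴, v ↦ (v, 0),
carries the column lattice of FCC(2a) onto the vectors of the column lattice of Lip(a) whose last
coordinate vanishes: the columns of FCC(2a) are c₁ − c₃, c₁ − c₄, c₁ + c₂ in terms of the columns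
cⱼ of Lip(a), and conversely, subtracting the (zero) last coordinate of Lip(a)·u from the others
gives FCC(2a)·(−u₃, −u₄, u₂). The induced map of quotients is therefore injective, its image is the
subgroup generated by e₁, e₂, e₃, and it sends unit steps to unit steps.
-/

open Matrix

/-- The subgroup (submodule) `Mℤⁿ` generated by the columns of `M`. -/
def colSpan {ι : Type*} [Fintype ι] [DecidableEq ι] (M : Matrix ι ι ℤ) :
    Submodule ℤ (ι → ℤ) :=
  LinearMap.range M.mulVecLin

/-- The vertex set `ℤⁿ/Mℤⁿ` of the lattice graph. -/
abbrev LatticeVertex {ι : Type*} [Fintype ι] [DecidableEq ι] (M : Matrix ι ι ℤ) :=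
  (ι → ℤ) ⧸ colSpan M

/-- The `i`-th standard basis vector of `ℤⁿ`. -/
def stdBasis {ι : Type*} [DecidableEq ι] (i : ι) : ι → ℤ := Pi.single i 1

/-- The lattice graph `𝒢(M)`. -/
def latticeGraph {ι : Type*} [Fintype ι] [DecidableEq ι] (M : Matrix ι ι ℤ) :
    SimpleGraph (LatticeVertex M) where
  Adj v w := v ≠ w ∧ ∃ i : ι,
      v - w = Submodule.Quotient.mk (stdBasis i) ∨
      w - v = Submodule.Quotient.mk (stdBasis i)
  symm := ⟨by rintro v w ⟨hne, i, h⟩; exact ⟨hne.symm, i, h.symm⟩⟩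
  loopless := ⟨fun v h => h.1 rfl⟩

/-- The subgraph of `𝒢(M)` spanned by the directions in `S`. -/
def spannedSubgraph {ι : Type*} [Fintype ι] [DecidableEq ι] (M : Matrix ι ι ℤ) (S : Set ι) :
    SimpleGraph (AddSubgroup.closure
      ((fun i => (Submodule.Quotient.mk (stdBasis i) : LatticeVertex M)) '' S)) where
  Adj v w := v ≠ w ∧ ∃ i ∈ S,
      (v : LatticeVertex M) - (w : LatticeVertex M) = Submodule.Quotient.mk (stdBasis i) ∨
      (w : LatticeVertex M) - (v : LatticeVertex M) = Submodule.Quotient.mk (stdBasis i)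
  symm := ⟨by rintro v w ⟨hne, i, hiS, h⟩; exact ⟨hne.symm, i, hiS, h.symm⟩⟩
  loopless := ⟨fun v h => h.1 rfl⟩

/-- The projection of `𝒢(M)` over `e_j`: the subgraph spanned by all other directions. -/
def projGraph {ι : Type*} [Fintype ι] [DecidableEq ι] (M : Matrix ι ι ℤ) (j : ι) :=
  spannedSubgraph M {i | i ≠ j}

/-- The torus graph `T(a₁,…,aₙ)`. -/
def torusGraph {n : ℕ} (a : Fin n → ℕ) : SimpleGraph (∀ i, ZMod (a i)) where
  Adj x y := x ≠ y ∧ ∃ i, (∀ j, j ≠ i → x j = y j) ∧ (x i = y i + 1 ∨ y i = x i + 1)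
  symm := ⟨by
    rintro x y ⟨hne, i, hj, h⟩
    exact ⟨hne.symm, i, fun j hji => (hj j hji).symm, h.symm⟩⟩
  loopless := ⟨fun x h => h.1 rfl⟩

/-- A signed permutation matrix: exactly one nonzero entry, equal to `±1`,
in each row and each column. -/
def IsSignedPerm {n : ℕ} (P : Matrix (Fin n) (Fin n) ℤ) : Prop :=
  (∀ i j, P i j = 0 ∨ P i j = 1 ∨ P i j = -1) ∧
  (∀ i, ∃! j, P i j ≠ 0) ∧ (∀ j, ∃! i, P i j ≠ 0)

/-- `𝒢(M)` is linearly symmetric: for every `i` there is a signed permutation matrix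
inducing an automorphism of `𝒢(M)` sending `e₁` to `±e_i`. -/
def IsLinearlySymmetric {n : ℕ} (M : Matrix (Fin n) (Fin n) ℤ) : Prop :=
  ∀ i : Fin n, ∃ P : Matrix (Fin n) (Fin n) ℤ, IsSignedPerm P ∧
    (∃ Q : Matrix (Fin n) (Fin n) ℤ, P * M = M * Q) ∧
    (P.mulVec (stdBasis (⟨0, i.pos⟩ : Fin n)) = stdBasis i ∨
      P.mulVec (stdBasis (⟨0, i.pos⟩ : Fin n)) = -stdBasis i)

open Equiv

theorem isSignedPerm_permMatrix {n : ℕ} (σ : Perm (Fin n)) : IsSignedPerm (σ.permMatrix ℤ) := by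
  have entry : ∀ i j, σ.permMatrix ℤ i j ≠ 0 ↔ j = σ i := fun i j => by
    simp [PEquiv.toMatrix_apply, toPEquiv_apply, eq_comm]
  refine ⟨fun i j => ?_, fun i => ⟨σ i, (entry i _).2 rfl, fun j hj => (entry i j).1 hj⟩,
    fun j => ⟨σ.symm j, (entry _ j).2 (σ.apply_symm_apply j).symm,
      fun i hi => by rw [(entry i j).1 hi, σ.symm_apply_apply]⟩⟩
  by_cases h : j = σ i <;> simp [PEquiv.toMatrix_apply, toPEquiv_apply, eq_comm, h]

theorem permMatrix_swap_mulVec_stdBasis {n : ℕ} (i j : Fin n) :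
    (swap i j).permMatrix ℤ *ᵥ stdBasis i = stdBasis j := by
  rw [permMatrix_mulVec, _root_.stdBasis, _root_.stdBasis, Pi.single_comp_equiv, symm_swap,
    swap_apply_left]

theorem isLinearlySymmetric_of_swap {n : ℕ} (M : Matrix (Fin n) (Fin n) ℤ)
    (h : ∀ i : Fin n, ∃ Q, (swap ⟨0, i.pos⟩ i).permMatrix ℤ * M = M * Q) :
    IsLinearlySymmetric M := fun i =>
  ⟨_, isSignedPerm_permMatrix _, h i, Or.inl (permMatrix_swap_mulVec_stdBasis _ _)⟩

theorem IsLinearlySymmetric.smul {n : ℕ} {M : Matrix (Fin n) (Fin n) ℤ}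
    (hM : IsLinearlySymmetric M) (c : ℤ) : IsLinearlySymmetric (c • M) := fun i => by
  obtain ⟨P, hP, ⟨Q, hQ⟩, he⟩ := hM i
  exact ⟨P, hP, ⟨Q, by rw [Matrix.mul_smul, hQ, Matrix.smul_mul]⟩, he⟩

def lipMatrix (a : ℕ) : Matrix (Fin 4) (Fin 4) ℤ :=
  !![(a : ℤ), -a, -a, -a; a, a, -a, a; a, a, a, -a; a, -a, a, a]

def fccMatrix (b : ℤ) : Matrix (Fin 3) (Fin 3) ℤ :=
  !![b, b, 0; b, 0, b; 0, b, b]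

theorem lipMatrix_eq_smul (a : ℕ) : lipMatrix a = (a : ℤ) • lipMatrix 1 := by
  ext i j
  fin_cases i <;> fin_cases j <;> simp [lipMatrix]

theorem isLinearlySymmetric_lipMatrix_one : IsLinearlySymmetric (lipMatrix 1) := by
  apply isLinearlySymmetric_of_swap
  intro i
  fin_cases i
  · exact ⟨1, by decide⟩
  · exact ⟨!![1, 0, 0, 0; 0, 0, 0, -1; 0, 0, 1, 0; 0, -1, 0, 0], by decide⟩
  · exact ⟨!![1, 0, 0, 0; 0, 0, -1, 0; 0, -1, 0, 0; 0, 0, 0, 1], by decide⟩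
  · exact ⟨!![1, 0, 0, 0; 0, 1, 0, 0; 0, 0, 0, -1; 0, 0, -1, 0], by decide⟩

theorem isLinearlySymmetric_lipMatrix (a : ℕ) : IsLinearlySymmetric (lipMatrix a) :=
  lipMatrix_eq_smul a ▸ isLinearlySymmetric_lipMatrix_one.smul a

theorem colSpan_le_comap_of_mul_eq {ι κ : Type*} [Fintype ι] [DecidableEq ι] [Fintype κ]
    [DecidableEq κ] {M : Matrix ι ι ℤ} {N : Matrix κ κ ℤ} {E : Matrix ι κ ℤ} {W : Matrix ι κ ℤ}
    (h : E * N = M * W) : colSpan N ≤ (colSpan M).comap E.mulVecLin := by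
  rintro _ ⟨u, rfl⟩
  exact ⟨W *ᵥ u, by simp [mulVec_mulVec, h]⟩

theorem comap_colSpan_le_of_mul_eq {ι κ : Type*} [Fintype ι] [DecidableEq ι] [Fintype κ]
    [DecidableEq κ] {M : Matrix ι ι ℤ} {N : Matrix κ κ ℤ} {E : Matrix ι κ ℤ} {R T : Matrix κ ι ℤ}
    (hRE : R * E = 1) (hRM : R * M = N * T) : (colSpan M).comap E.mulVecLin ≤ colSpan N := by
  rintro v ⟨u, hu⟩
  refine ⟨T *ᵥ u, ?_⟩
  calc N *ᵥ (T *ᵥ u) = R *ᵥ (M *ᵥ u) := by rw [mulVec_mulVec, mulVec_mulVec, hRM]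
    _ = R *ᵥ (E *ᵥ v) := congrArg (R *ᵥ ·) hu
    _ = v := by rw [mulVec_mulVec, hRE, one_mulVec]

section LatticeEmbedding

variable {ι κ : Type*} [Fintype ι] [DecidableEq ι] [Fintype κ] [DecidableEq κ]
  {M : Matrix ι ι ℤ} {N : Matrix κ κ ℤ} {L : (κ → ℤ) →ₗ[ℤ] (ι → ℤ)}

def latticeMap (hL : colSpan N = (colSpan M).comap L) : LatticeVertex N →ₗ[ℤ] LatticeVertex M :=
  (colSpan N).mapQ (colSpan M) L hL.le

variable (hL : colSpan N = (colSpan M).comap L)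

theorem latticeMap_mk (v : κ → ℤ) :
    latticeMap hL (Submodule.Quotient.mk v) = Submodule.Quotient.mk (L v) :=
  rfl

theorem latticeMap_injective : Function.Injective (latticeMap hL) := by
  rw [← LinearMap.ker_eq_bot, latticeMap, Submodule.ker_mapQ, ← hL, Submodule.mkQ_map_self]

variable {f : κ → ι} (hLf : ∀ k, L (stdBasis k) = stdBasis (f k))
include hLf

theorem mem_range_latticeMap_iff (x : LatticeVertex M) :
    x ∈ LinearMap.range (latticeMap hL) ↔
      x ∈ AddSubgroup.closure
        ((fun i => (Submodule.Quotient.mk (stdBasis i) : LatticeVertex M)) '' Set.range f) := by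
  constructor
  · rintro ⟨y, rfl⟩
    obtain ⟨v, rfl⟩ := Submodule.Quotient.mk_surjective _ y
    have hv : ∑ k, v k • stdBasis k = v := by
      ext j
      simp [_root_.stdBasis, Pi.single_apply]
    rw [latticeMap_mk, ← hv]
    simp only [map_sum, map_zsmul, hLf, ← Submodule.mkQ_apply]
    exact AddSubgroup.sum_mem _ fun k _ => AddSubgroup.zsmul_mem _
      (AddSubgroup.subset_closure (Set.mem_image_of_mem _ (Set.mem_range_self k))) _
  · intro hx
    refine (AddSubgroup.closure_le (LinearMap.range (latticeMap hL)).toAddSubgroup).2 ?_ hx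
    rintro _ ⟨_, ⟨k, rfl⟩, rfl⟩
    exact ⟨Submodule.Quotient.mk (stdBasis k), by rw [latticeMap_mk, hLf]⟩

theorem latticeMap_eq_mk_stdBasis_iff (z : LatticeVertex N) (k : κ) :
    latticeMap hL z = Submodule.Quotient.mk (stdBasis (f k)) ↔
      z = Submodule.Quotient.mk (stdBasis k) := by
  rw [← hLf, ← latticeMap_mk hL]
  exact (latticeMap_injective hL).eq_iff

noncomputable def latticeGraphIsoSpannedSubgraph {S : Set ι} (hS : Set.range f = S) :
    latticeGraph N ≃g spannedSubgraph M S where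
  toEquiv := (LinearEquiv.ofInjective _ (latticeMap_injective hL)).toEquiv.trans
    (Equiv.subtypeEquivRight (hS ▸ mem_range_latticeMap_iff hL hLf))
  map_rel_iff' {x y} := by
    subst hS
    show _ ∧ _ ↔ _ ∧ _
    simp only [Set.exists_range_iff, ne_eq, EmbeddingLike.apply_eq_iff_eq, Equiv.trans_apply,
      Equiv.subtypeEquivRight_apply_coe, LinearEquiv.coe_toEquiv, LinearEquiv.ofInjective_apply,
      ← map_sub, latticeMap_eq_mk_stdBasis_iff hL hLf]

end LatticeEmbedding

theorem range_castSucc_eq_ne_last (n : ℕ) :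
    Set.range (Fin.castSucc : Fin n → Fin (n + 1)) = {i | i ≠ Fin.last n} :=
  Set.ext fun i => ⟨by rintro ⟨j, rfl⟩; exact (Fin.castSucc_lt_last j).ne,
    fun h => ⟨i.castPred h, i.castSucc_castPred h⟩⟩

def inclusionMatrix : Matrix (Fin 4) (Fin 3) ℤ :=
  !![1, 0, 0; 0, 1, 0; 0, 0, 1; 0, 0, 0]

theorem inclusionMatrix_mulVec_stdBasis (k : Fin 3) :
    inclusionMatrix *ᵥ stdBasis k = stdBasis (Fin.castSucc k) := by
  fin_cases k <;> decide

theorem inclusionMatrix_mul_fccMatrix (a : ℕ) :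
    inclusionMatrix * fccMatrix (2 * a) =
      lipMatrix a * !![1, 1, 1; 0, 0, 1; -1, 0, 0; 0, -1, 0] := by
  ext i j
  fin_cases i <;> fin_cases j <;>
    simp [inclusionMatrix, fccMatrix, lipMatrix, mul_apply, Fin.sum_univ_succ, two_mul]

theorem lipMatrix_mul_eq_fccMatrix_mul (a : ℕ) :
    !![1, 0, 0, -1; 0, 1, 0, -1; 0, 0, 1, -1] * lipMatrix a =
      fccMatrix (2 * a) * !![0, 0, -1, 0; 0, 0, 0, -1; 0, 1, 0, 0] := by
  ext i j
  fin_cases i <;> fin_cases j <;>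
    simp [fccMatrix, lipMatrix, mul_apply, Fin.sum_univ_succ, two_mul]

theorem colSpan_fccMatrix_eq_comap (a : ℕ) :
    colSpan (fccMatrix (2 * a)) = (colSpan (lipMatrix a)).comap inclusionMatrix.mulVecLin :=
  le_antisymm (colSpan_le_comap_of_mul_eq (inclusionMatrix_mul_fccMatrix a))
    (comap_colSpan_le_of_mul_eq (by decide) (lipMatrix_mul_eq_fccMatrix_mul a))

theorem Lip_symmetric_lift_of_FCC_general (a : ℕ) :
    IsLinearlySymmetric
      !![(a : ℤ), -a, -a, -a; a, a, -a, a; a, a, a, -a; a, -a, a, a] ∧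
    Nonempty (projGraph
      !![(a : ℤ), -a, -a, -a; a, a, -a, a; a, a, a, -a; a, -a, a, a] (3 : Fin 4) ≃g
      latticeGraph !![(2 * a : ℤ), 2 * a, 0; 2 * a, 0, 2 * a; 0, 2 * a, 2 * a]) :=
  ⟨isLinearlySymmetric_lipMatrix a,
    ⟨(latticeGraphIsoSpannedSubgraph (colSpan_fccMatrix_eq_comap a)
      inclusionMatrix_mulVec_stdBasis (range_castSucc_eq_ne_last 3)).symm⟩⟩

/-- `Lip(a)` is linearly symmetric and its projection over `e₄` is
isomorphic to `FCC(2a)`: `Lip(a)` is a symmetric lift of `FCC(2a)`. -/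
theorem Lip_symmetric_lift_of_FCC (a : ℕ) (ha : 0 < a) :
    IsLinearlySymmetric
      !![(a : ℤ), -a, -a, -a; a, a, -a, a; a, a, a, -a; a, -a, a, a] ∧
    Nonempty (projGraph
      !![(a : ℤ), -a, -a, -a; a, a, -a, a; a, a, a, -a; a, -a, a, a] (3 : Fin 4) ≃g
      latticeGraph !![(2 * a : ℤ), 2 * a, 0; 2 * a, 0, 2 * a; 0, 2 * a, 2 * a]) :=
  Lip_symmetric_lift_of_FCC_general a
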